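/- Let R be a commutative Noetherian ring, α an automorphism of R, and S = R[θ; α]. If S is a primitive ring and R has Krull dimension 0, then S satisfies property (⋄). -/

import Mathlib

/-!
STATEMENT 13: Let R be a commutative Noetherian ring, α an automorphism of R, and
S = R[θ; α]. If S is primitive and R has Krull dimension 0 then S satisfies (⋄).
-/

open MulOpposite

/-- `S`, together with the embedding `i : R →+* S` and the element `θ`, is the skew
polynomial ring `R[θ; α]`. -/
structure IsSkewPolynomialRing {R S : Type*} [Ring R] [Ring S]
    (α : R ≃+* R) (i : R →+* S) (θ : S) : Prop where
  theta_mul : ∀ r : R, θ * i r = i (α r) * θ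
  exists_unique_repr : ∀ s : S, ∃! f : ℕ →₀ R, s = f.sum fun n r => i r * θ ^ n

universe u

/-- A ring `S` satisfies property (⋄) if every finitely generated essential extension of
every simple right `S`-module is Artinian (right modules are modules over `Sᵐᵒᵖ`). -/
def HasDiamond (S : Type u) [Ring S] : Prop :=
  ∀ (M : Type u) [AddCommGroup M] [Module Sᵐᵒᵖ M], Module.Finite Sᵐᵒᵖ M →
    ∀ V : Submodule Sᵐᵒᵖ M, IsSimpleModule Sᵐᵒᵖ V →
      (∀ P : Submodule Sᵐᵒᵖ M, P ⊓ V = ⊥ → P = ⊥) → IsArtinian Sᵐᵒᵖ M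

/-- A ring is right primitive iff it has a maximal right ideal `I` such that the simple
right module `A/I` is faithful. -/
def IsRightPrimitiveRing (A : Type u) [Ring A] : Prop :=
  ∃ I : Submodule Aᵐᵒᵖ A, IsCoatom I ∧ Module.annihilator Aᵐᵒᵖ (A ⧸ I) = ⊥

/-!
Primitivity forces `R` to be reduced: the polynomials with nilpotent coefficients form a nil
right ideal of `S`, hence lie in the Jacobson radical, which annihilates the faithful simple
module. Being reduced, Noetherian and zero-dimensional, `R` is semisimple.

Let `M` be a finitely generated essential extension of a simple module `V` and `m ∈ M`. The
annihilator `I` of `m` is an essential right ideal: a nonzero right ideal `X` with `X ∩ I = 0`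
would give `0 ≠ v = m y ∈ V` with `y ∈ X`, simplicity of `V` gives `v = v θ b`, hence
`y = y θ b`, which is impossible for `y ≠ 0` by comparing lowest coefficients. The ideals of
leading coefficients of the elements of `I` of degree `≤ n` increase with `n` and stabilise at
some `N`. If they did not contain `1`, a complement `L` in the semisimple ring `R` would give
the nonzero right ideal of polynomials with coefficients in `L` vanishing below degree `N`,
which meets `I` trivially. So `I` contains a monic polynomial of degree `N`, and division by it
shows that `m S` is spanned over `R` by `m, m θ, …, m θ ^ (N - 1)`. Thus `M` is a finitely
generated module over the Artinian ring `R`, hence Artinian, a fortiori over `S`.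
-/

open Finset

theorem Ring.le_jacobson_of_forall_isNilpotent {A : Type*} [Ring A] {J : Ideal A}
    (hJ : ∀ x ∈ J, IsNilpotent x) : J ≤ Ring.jacobson A := by
  intro x hx
  rw [← Ideal.jacobson_bot, Ideal.mem_jacobson_iff]
  intro y
  obtain ⟨u, hu⟩ := (hJ _ (J.mul_mem_left y hx)).isUnit_add_one
  refine ⟨↑u⁻¹, ?_⟩
  rw [Submodule.mem_bot, mul_assoc, ← mul_add_one, ← hu, Units.inv_mul, sub_self]

namespace IsSkewPolynomialRing

section Ring

variable {R S : Type*} [Ring R] [Ring S] {α : R ≃+* R} {i : R →+* S} {θ : S}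
  (hS : IsSkewPolynomialRing α i θ)
include hS

/-- The coefficients of an element of `R[θ; α]`, written as `∑ i (f n) * θ ^ n`. -/
noncomputable def repr : S ≃+ (ℕ →₀ R) :=
  let toSkew : (ℕ →₀ R) →+ S :=
    Finsupp.liftAddHom fun n => (AddMonoidHom.mulRight (θ ^ n)).comp i.toAddMonoidHom
  have bij : Function.Bijective toSkew :=
    ⟨fun f g hfg => by
      obtain ⟨_, -, huniq⟩ := hS.exists_unique_repr (toSkew f)
      exact (huniq f rfl).trans (huniq g hfg).symm,
    fun s => (hS.exists_unique_repr s).exists.imp fun _ h => h.symm⟩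
  (AddEquiv.ofBijective toSkew bij).symm

theorem repr_symm_apply (f : ℕ →₀ R) : hS.repr.symm f = f.sum fun n r => i r * θ ^ n := rfl

theorem repr_monomial (n : ℕ) (r : R) : hS.repr (i r * θ ^ n) = Finsupp.single n r := by
  rw [← AddEquiv.eq_symm_apply, repr_symm_apply, Finsupp.sum_single_index (by simp)]

theorem repr_i (r : R) : hS.repr (i r) = Finsupp.single 0 r := by
  simpa using hS.repr_monomial 0 r

theorem theta_pow_mul (n : ℕ) (r : R) :
    θ ^ n * i r = i ((α ^ n) r) * θ ^ n := by
  induction n generalizing r with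
  | zero => simp
  | succ n ih =>
    rw [pow_succ, mul_assoc, hS.theta_mul, ← mul_assoc, ih, mul_assoc, ← pow_succ, pow_succ']
    rfl

theorem monomial_mul_monomial (k l : ℕ) (a b : R) :
    i a * θ ^ k * (i b * θ ^ l) = i (a * (α ^ k) b) * θ ^ (k + l) := by
  rw [mul_assoc, ← mul_assoc (θ ^ k), hS.theta_pow_mul, map_mul, pow_add]
  simp only [mul_assoc]

theorem repr_mul_apply (s t : S) (n : ℕ) :
    hS.repr (s * t) n =
      ∑ p ∈ antidiagonal n, hS.repr s p.1 * (α ^ p.1) (hS.repr t p.2) := by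
  obtain ⟨f, rfl⟩ := hS.repr.symm.surjective s
  obtain ⟨g, rfl⟩ := hS.repr.symm.surjective t
  simp only [AddEquiv.apply_symm_apply]
  induction f using Finsupp.induction_linear with
  | zero => simp
  | add f₁ f₂ h₁ h₂ => simp [add_mul, h₁, h₂, sum_add_distrib]
  | single k a =>
    induction g using Finsupp.induction_linear with
    | zero => simp
    | add g₁ g₂ h₁ h₂ => simp [mul_add, h₁, h₂, sum_add_distrib]
    | single l b =>
      rw [repr_symm_apply, repr_symm_apply, Finsupp.sum_single_index (by simp),
        Finsupp.sum_single_index (by simp), hS.monomial_mul_monomial, repr_monomial]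
      have hterm : ∀ p : ℕ × ℕ, p ≠ (k, l) →
          Finsupp.single k a p.1 * (α ^ p.1) (Finsupp.single l b p.2) = 0 := by
        rintro ⟨k', l'⟩ hne
        dsimp only
        obtain rfl | hk := eq_or_ne k' k
        · rw [Finsupp.single_eq_of_ne (a := l) fun h => hne (by rw [h]), map_zero, mul_zero]
        · rw [Finsupp.single_eq_of_ne hk, zero_mul]
      by_cases hn : k + l = n
      · subst hn
        rw [Finsupp.single_eq_same, sum_eq_single_of_mem (k, l)
          (HasAntidiagonal.mem_antidiagonal.2 rfl) fun p _ => hterm p]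
        simp
      · rw [Finsupp.single_eq_of_ne' hn, sum_eq_zero fun p hp => hterm p ?_]
        rintro rfl
        exact hn (HasAntidiagonal.mem_antidiagonal.1 hp)

theorem repr_mul_monomial_add (s : S) (r : R) (j k : ℕ) :
    hS.repr (s * (i r * θ ^ j)) (k + j) = hS.repr s k * (α ^ k) r := by
  rw [repr_mul_apply, repr_monomial, sum_eq_single_of_mem (k, j)
    (HasAntidiagonal.mem_antidiagonal.2 rfl)]
  · simp
  · rintro ⟨k', j'⟩ hp hne
    rw [HasAntidiagonal.mem_antidiagonal] at hp
    have hj : j' ≠ j := by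
      rintro rfl
      exact hne (Prod.ext (by dsimp only at hp ⊢; omega) rfl)
    rw [Finsupp.single_eq_of_ne hj, map_zero, mul_zero]

theorem repr_mul_monomial_of_lt (s : S) (r : R) {j k : ℕ} (h : k < j) :
    hS.repr (s * (i r * θ ^ j)) k = 0 := by
  rw [repr_mul_apply]
  refine sum_eq_zero fun p hp => ?_
  have := HasAntidiagonal.antidiagonal.snd_le hp
  rw [repr_monomial, Finsupp.single_eq_of_ne (by omega), map_zero, mul_zero]

theorem repr_mul_i (s : S) (r : R) (n : ℕ) :
    hS.repr (s * i r) n = hS.repr s n * (α ^ n) r := by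
  simpa using hS.repr_mul_monomial_add s r 0 n

theorem repr_mul_theta_succ (s : S) (n : ℕ) : hS.repr (s * θ) (n + 1) = hS.repr s n := by
  simpa using hS.repr_mul_monomial_add s 1 1 n

theorem repr_mul_theta_zero (s : S) : hS.repr (s * θ) 0 = 0 := by
  simpa using hS.repr_mul_monomial_of_lt s 1 zero_lt_one

theorem eq_zero_of_mul_theta_eq_zero {s : S} (h : s * θ = 0) : s = 0 :=
  hS.repr.injective <| Finsupp.ext fun n => by
    simpa [h] using (hS.repr_mul_theta_succ s n).symm

theorem eq_zero_of_eq_mul_theta_mul {s a : S} (h : s = s * θ * a) : s = 0 := by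
  refine hS.repr.injective (Finsupp.ext fun n => ?_)
  induction n using Nat.strong_induction_on with
  | _ n ih =>
    rw [map_zero, Finsupp.zero_apply, h, repr_mul_apply]
    refine sum_eq_zero fun ⟨k, l⟩ hp => ?_
    cases k with
    | zero => rw [repr_mul_theta_zero, zero_mul]
    | succ k =>
      have := HasAntidiagonal.antidiagonal.fst_le hp
      rw [repr_mul_theta_succ, ih k (by dsimp only at this; omega), map_zero, Finsupp.zero_apply,
        zero_mul]

end Ring

section CommRing

variable {R S : Type*} [CommRing R] [Ring S] {α : R ≃+* R} {i : R →+* S} {θ : S}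
  (hS : IsSkewPolynomialRing α i θ)

def coeffIdeal (A : ℕ →o Ideal R) : Ideal Sᵐᵒᵖ where
  carrier := {x | ∀ n, hS.repr (unop x) n ∈ A n}
  add_mem' hx hy n := by simpa using add_mem (hx n) (hy n)
  zero_mem' n := by simp
  smul_mem' a x hx n := by
    rw [smul_eq_mul, unop_mul, repr_mul_apply]
    exact sum_mem fun p hp =>
      A.mono (HasAntidiagonal.antidiagonal.fst_le hp) (Ideal.mul_mem_right _ _ (hx p.1))

def leadingCoeffIdeal (I : Ideal Sᵐᵒᵖ) (n : ℕ) : Ideal R where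
  carrier := {r | ∃ x ∈ I, (∀ k, n < k → hS.repr (unop x) k = 0) ∧ hS.repr (unop x) n = r}
  add_mem' := by
    rintro _ _ ⟨x, hx, hxn, rfl⟩ ⟨y, hy, hyn, rfl⟩
    exact ⟨x + y, I.add_mem hx hy, fun k hk => by simp [hxn k hk, hyn k hk], by simp⟩
  zero_mem' := ⟨0, I.zero_mem, fun _ _ => by simp, by simp⟩
  smul_mem' := by
    rintro c _ ⟨x, hx, hxn, rfl⟩
    refine ⟨op (i ((α ^ n).symm c)) * x, I.mul_mem_left _ hx, fun k hk => ?_, ?_⟩ <;>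
      simp only [unop_mul, unop_op, repr_mul_i]
    · rw [hxn k hk, zero_mul]
    · rw [RingEquiv.apply_symm_apply, smul_eq_mul, mul_comm]

theorem leadingCoeffIdeal_mono (I : Ideal Sᵐᵒᵖ) : Monotone (hS.leadingCoeffIdeal I) := by
  refine monotone_nat_of_le_succ fun n r ⟨x, hx, hxn, hr⟩ =>
    ⟨op θ * x, I.mul_mem_left _ hx, fun k hk => ?_, by simpa [repr_mul_theta_succ] using hr⟩
  cases k with
  | zero => omega
  | succ k => rw [unop_mul, unop_op, repr_mul_theta_succ, hxn k (by omega)]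

theorem coeffIdeal_inf_eq_bot {I : Ideal Sᵐᵒᵖ} {A : ℕ →o Ideal R}
    (hA : ∀ n, Disjoint (A n) (hS.leadingCoeffIdeal I n)) : hS.coeffIdeal A ⊓ I = ⊥ := by
  refine eq_bot_iff.2 fun x ⟨hxA, hxI⟩ => (Submodule.mem_bot _).2 (by_contra fun hx => ?_)
  have hsupp : (hS.repr (unop x)).support.Nonempty := by
    rwa [Finsupp.support_nonempty_iff, ne_eq, AddEquivClass.map_eq_zero_iff, unop_eq_zero_iff]
  set d := (hS.repr (unop x)).support.max' hsupp
  have hd : hS.repr (unop x) d ≠ 0 := Finsupp.mem_support_iff.1 (max'_mem _ _)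
  have htop : ∀ k, d < k → hS.repr (unop x) k = 0 := fun k hk =>
    by_contra fun h => (le_max' _ k (Finsupp.mem_support_iff.2 h)).not_gt hk
  exact hd (Submodule.disjoint_def.1 (hA d) _ (hxA d) ⟨x, hxI, htop, rfl⟩)

theorem exists_one_mem_leadingCoeffIdeal [IsSemisimpleRing R] {I : Ideal Sᵐᵒᵖ}
    (hI : ∀ X : Ideal Sᵐᵒᵖ, X ⊓ I = ⊥ → X = ⊥) : ∃ N, (1 : R) ∈ hS.leadingCoeffIdeal I N := by
  obtain ⟨N, hN⟩ : ∃ N, ∀ n, N ≤ n → hS.leadingCoeffIdeal I N = hS.leadingCoeffIdeal I n :=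
    monotone_stabilizes_iff_noetherian.mpr inferInstance ⟨_, hS.leadingCoeffIdeal_mono I⟩
  refine ⟨N, by_contra fun h1 => ?_⟩
  obtain ⟨L, hL⟩ := exists_isCompl (hS.leadingCoeffIdeal I N)
  obtain ⟨f, hf, hf0⟩ := Submodule.exists_mem_ne_zero_of_ne_bot fun hL0 : L = ⊥ =>
    h1 (by subst hL0; rw [eq_top_of_isCompl_bot hL]; trivial)
  let A : ℕ →o Ideal R := ⟨fun n => if N ≤ n then L else ⊥, fun a b hab => by
    dsimp only
    split_ifs <;> first | exact le_rfl | exact bot_le | omega⟩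
  have hX : hS.coeffIdeal A ⊓ I = ⊥ := hS.coeffIdeal_inf_eq_bot fun n => by
    show Disjoint (if N ≤ n then L else ⊥) _
    split_ifs with hn
    · rw [← hN n hn]
      exact hL.disjoint.symm
    · exact disjoint_bot_left
  have hmem : op (i f * θ ^ N) ∈ hS.coeffIdeal A := fun n => by
    show _ ∈ if N ≤ n then L else ⊥
    rw [unop_op, repr_monomial, Finsupp.single_apply]
    split_ifs <;> first | exact hf | exact zero_mem _ | omega
  have h0 := hI _ hX ▸ hmem
  rw [Submodule.mem_bot, op_eq_zero_iff] at h0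
  have hfN := DFunLike.congr_fun (hS.repr_monomial N f) N
  simp only [h0, map_zero, Finsupp.coe_zero, Pi.zero_apply, Finsupp.single_eq_same] at hfN
  exact hf0 hfN.symm

theorem exists_sub_mem_of_one_mem_leadingCoeffIdeal {I : Ideal Sᵐᵒᵖ} {N : ℕ}
    (h1 : (1 : R) ∈ hS.leadingCoeffIdeal I N) (s : S) :
    ∃ r : S, (∀ k, N ≤ k → hS.repr r k = 0) ∧ op s - op r ∈ I := by
  obtain ⟨g, hgI, hgtop, hgN⟩ := h1
  suffices H : ∀ d (s : S), (∀ k, d ≤ k → hS.repr s k = 0) →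
      ∃ r : S, (∀ k, N ≤ k → hS.repr r k = 0) ∧ op s - op r ∈ I by
    obtain ⟨d, hd⟩ := exists_nat_subset_range (hS.repr s).support
    refine H d s fun k hk => by_contra fun h => ?_
    have := mem_range.1 (hd (Finsupp.mem_support_iff.2 h))
    omega
  intro d
  induction d with
  | zero => exact fun s hs => ⟨s, fun k _ => hs k k.zero_le, by simp⟩
  | succ d ih =>
    intro s hs
    by_cases hdN : d < N
    · exact ⟨s, fun k hk => hs k (by omega), by simp⟩
    set t := unop g * (i ((α ^ N).symm (hS.repr s d)) * θ ^ (d - N))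
    have hst : ∀ k, d ≤ k → hS.repr (s - t) k = 0 := by
      intro k hk
      obtain ⟨m, rfl⟩ : ∃ m, k = m + (d - N) := ⟨k - (d - N), by omega⟩
      rw [map_sub, Finsupp.sub_apply, repr_mul_monomial_add]
      rcases hk.eq_or_lt with hkd | hkd
      · obtain rfl : m = N := by omega
        rw [hgN, one_mul, RingEquiv.apply_symm_apply, ← hkd, sub_self]
      · rw [hs _ (by omega), hgtop m (by omega), zero_mul, sub_zero]
    obtain ⟨r, hr, hsr⟩ := ih (s - t) hst
    refine ⟨r, hr, ?_⟩
    have ht : op t ∈ I := by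
      rw [op_mul, op_unop]
      exact I.mul_mem_left _ hgI
    convert I.add_mem hsr ht using 1
    rw [op_sub]
    abel

theorem isNilpotent_of_repr_mem_nilradical [IsNoetherianRing R] {s : S}
    (hs : ∀ n, hS.repr s n ∈ nilradical R) : IsNilpotent s := by
  have hpow : ∀ k n, hS.repr (s ^ k) n ∈ nilradical R ^ k := by
    intro k
    induction k with
    | zero => simp
    | succ k ih =>
      intro n
      rw [pow_succ, pow_succ, repr_mul_apply]
      exact sum_mem fun p _ =>
        Ideal.mul_mem_mul (ih _) (mem_nilradical.2 ((mem_nilradical.1 (hs _)).map _))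
  obtain ⟨c, hc⟩ := IsNoetherianRing.isNilpotent_nilradical R
  exact ⟨c, hS.repr.injective (Finsupp.ext fun n => by simpa [hc] using hpow c n)⟩

end CommRing

theorem isReduced {R S : Type u} [CommRing R] [IsNoetherianRing R] [Ring S]
    {α : R ≃+* R} {i : R →+* S} {θ : S} (hS : IsSkewPolynomialRing α i θ)
    (hprim : IsRightPrimitiveRing S) : IsReduced R := by
  obtain ⟨I, hI, hfaithful⟩ := hprim
  have : IsSimpleModule Sᵐᵒᵖ (S ⧸ I) := isSimpleModule_iff_isCoatom.mpr hI
  set J := hS.coeffIdeal (OrderHom.const ℕ (nilradical R))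
  have hJ : J ≤ Module.annihilator Sᵐᵒᵖ (S ⧸ I) := by
    refine (Ring.le_jacobson_of_forall_isNilpotent fun x hx => ?_).trans
      (IsSemisimpleModule.jacobson_le_annihilator _ _)
    obtain ⟨n, hn⟩ := hS.isNilpotent_of_repr_mem_nilradical hx
    exact ⟨n, unop_injective (by rw [unop_pow, hn, unop_zero])⟩
  refine ⟨fun r hr => ?_⟩
  have hir : op (i r) ∈ J := fun n => by
    rw [unop_op, repr_i, Finsupp.single_apply]
    split_ifs
    exacts [mem_nilradical.2 hr, zero_mem _]
  have := hJ hir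
  rw [hfaithful, Submodule.mem_bot, op_eq_zero_iff] at this
  simpa [this] using (DFunLike.congr_fun (hS.repr_i r) 0).symm

section Module

variable {R S : Type*} [CommRing R] [Ring S] {α : R ≃+* R} {i : R →+* S} {θ : S}
  (hS : IsSkewPolynomialRing α i θ) {M : Type*} [AddCommGroup M] [Module Sᵐᵒᵖ M]
  {V : Submodule Sᵐᵒᵖ M}
include hS

theorem ker_toSpanSingleton_essential
    (hV : IsSimpleModule Sᵐᵒᵖ V) (hess : ∀ P : Submodule Sᵐᵒᵖ M, P ⊓ V = ⊥ → P = ⊥) (m : M)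
    (X : Ideal Sᵐᵒᵖ) (hX : X ⊓ LinearMap.ker (LinearMap.toSpanSingleton Sᵐᵒᵖ M m) = ⊥) :
    X = ⊥ := by
  have hXm : ∀ x ∈ X, x • m = 0 → x = 0 := fun x hx hxm =>
    (Submodule.mem_bot _).1 (hX ▸ Submodule.mem_inf.2 ⟨hx, by simpa using hxm⟩)
  refine eq_bot_iff.2 fun w hw => (Submodule.mem_bot _).2 (by_contra fun hw0 => ?_)
  obtain ⟨v, hv, hv0⟩ := Submodule.exists_mem_ne_zero_of_ne_bot
    fun h : Submodule.span Sᵐᵒᵖ {w • m} ⊓ V = ⊥ =>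
      hw0 (hXm w hw (Submodule.span_singleton_eq_bot.1 (hess _ h)))
  obtain ⟨a, rfl⟩ := Submodule.mem_span_singleton.1 hv.1
  obtain ⟨y, hyX, hym⟩ : ∃ y ∈ X, y • m = a • w • m :=
    ⟨a * w, X.mul_mem_left a hw, mul_smul a w m⟩
  have hy0 : y ≠ 0 := fun h => hv0 (by rw [← hym, h, zero_smul])
  have hθv : op θ • a • w • m ≠ 0 := by
    rw [← hym, ← mul_smul]
    intro h
    refine hy0 (unop_injective (hS.eq_zero_of_mul_theta_eq_zero ?_))
    simpa using congrArg unop (hXm _ (X.mul_mem_left _ hyX) h)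
  obtain ⟨b, hb⟩ : ∃ b : Sᵐᵒᵖ, b • op θ • a • w • m = a • w • m := by
    have hspan := ((isSimpleModule_iff_isAtom.mp hV).le_iff.1
      ((Submodule.span_singleton_le_iff_mem _ _).2 (V.smul_mem _ hv.2))).resolve_left
      (by simpa using hθv)
    exact Submodule.mem_span_singleton.1 (hspan ▸ hv.2)
  have hfix : y = b * op θ * y := by
    refine sub_eq_zero.1 (hXm _ (X.sub_mem hyX (X.mul_mem_left _ hyX)) ?_)
    rw [sub_smul, mul_smul, mul_smul, hym, hb, sub_self]
  exact hy0 (unop_injective (hS.eq_zero_of_eq_mul_theta_mul (a := unop b)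
    (by simpa [mul_assoc] using congrArg unop hfix)))

theorem exists_finset_forall_smul_mem_span [IsSemisimpleRing R] [Module R M]
    (hsmul : ∀ (r : R) (x : M), r • x = op (i r) • x) (hV : IsSimpleModule Sᵐᵒᵖ V)
    (hess : ∀ P : Submodule Sᵐᵒᵖ M, P ⊓ V = ⊥ → P = ⊥) (m : M) :
    ∃ t : Finset M, ∀ a : Sᵐᵒᵖ, a • m ∈ Submodule.span R (t : Set M) := by
  classical
  obtain ⟨N, hN⟩ :=
    hS.exists_one_mem_leadingCoeffIdeal (hS.ker_toSpanSingleton_essential hV hess m)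
  refine ⟨(range N).image fun n => op (θ ^ n) • m, fun a => ?_⟩
  obtain ⟨r, hr, har⟩ := hS.exists_sub_mem_of_one_mem_leadingCoeffIdeal hN (unop a)
  rw [op_unop, LinearMap.mem_ker, LinearMap.toSpanSingleton_apply, sub_smul, sub_eq_zero] at har
  rw [har, ← hS.repr.symm_apply_apply r, repr_symm_apply, Finsupp.sum, op_sum, sum_smul]
  refine Submodule.sum_mem _ fun k hk => ?_
  have hkN : k < N := by_contra fun h => Finsupp.mem_support_iff.1 hk (hr k (not_lt.1 h))
  rw [← RingEquiv.apply_symm_apply (α ^ k) (hS.repr r k), ← hS.theta_pow_mul, op_mul, mul_smul,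
    ← hsmul]
  exact Submodule.smul_mem _ _ (Submodule.subset_span (by simpa using ⟨k, hkN, rfl⟩))

theorem finite_of_essential [IsSemisimpleRing R] [Module R M] [Module.Finite Sᵐᵒᵖ M]
    (hsmul : ∀ (r : R) (x : M), r • x = op (i r) • x)
    (hV : IsSimpleModule Sᵐᵒᵖ V) (hess : ∀ P : Submodule Sᵐᵒᵖ M, P ⊓ V = ⊥ → P = ⊥) :
    Module.Finite R M := by
  classical
  choose t ht using hS.exists_finset_forall_smul_mem_span hsmul hV hess
  obtain ⟨G, hG⟩ := Module.Finite.fg_top (R := Sᵐᵒᵖ) (M := M)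
  refine ⟨⟨G.biUnion t, eq_top_iff.2 fun x _ => ?_⟩⟩
  obtain ⟨f, -, rfl⟩ := Submodule.mem_span_finset.1 (hG ▸ Submodule.mem_top : x ∈ _)
  exact Submodule.sum_mem _ fun g hg =>
    Submodule.span_mono (coe_subset.2 (subset_biUnion_of_mem t hg)) (ht g (f g))

theorem isArtinian_of_essential [IsSemisimpleRing R] [Module.Finite Sᵐᵒᵖ M]
    (hV : IsSimpleModule Sᵐᵒᵖ V)
    (hess : ∀ P : Submodule Sᵐᵒᵖ M, P ⊓ V = ⊥ → P = ⊥) : IsArtinian Sᵐᵒᵖ M := by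
  let ρ : R →+* Sᵐᵒᵖ := i.toOpposite fun x y => by
    rw [Commute, SemiconjBy, ← map_mul, ← map_mul, mul_comm]
  let _ : Module R Sᵐᵒᵖ := Module.compHom Sᵐᵒᵖ ρ
  let _ : Module R M := Module.compHom M ρ
  have : IsScalarTower R Sᵐᵒᵖ M := ⟨fun r a x => mul_smul (ρ r) a x⟩
  have := hS.finite_of_essential (fun _ _ => rfl) hV hess
  exact isArtinian_of_tower R inferInstance

end Module

end IsSkewPolynomialRing

theorem hasDiamond_of_primitive_of_krullDim_zero
    {R S : Type u} [CommRing R] [IsNoetherianRing R] [Ring S]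
    (α : R ≃+* R) (i : R →+* S) (θ : S) (hS : IsSkewPolynomialRing α i θ)
    (hprim : IsRightPrimitiveRing S)
    (hdim : ringKrullDim R = 0) :
    HasDiamond S := by
  have : IsReduced R := hS.isReduced hprim
  have : Ring.KrullDimLE 0 R := Ring.krullDimLE_iff.2 hdim.le
  have := IsNoetherianRing.isArtinianRing_of_krullDimLE_zero (R := R)
  have := IsArtinianRing.isSemisimpleRing_of_isReduced R
  intro M _ _ _ V hV hess
  exact hS.isArtinian_of_essential hV hess
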